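/- For all real numbers x and y, the conjunction of the following four conditions holds if and only if (0 < x and y = ln(x)): (i) if 1 < x then y = ln(max(x-1, 0) + 1); (ii) x = 1 if and only if y = 0; (iii) if 0 < x < 1 then there exist reals a, b with x = exp(a)/(exp(a)+1), x = tanh(b), and y = a - 2·b + ln(max(x, 0) + 1); (iv) 0 < x. -/

import Mathlib

/-!
On `(0, 1)` the two equations force `a = log (x / (1 - x))` (the inverse of the sigmoid) and
`b = artanh x = ½ log ((1 + x) / (1 - x))`, so `a - 2b + log (1 + x) = log x`. For `x ≥ 1` the
first two clauses give `log x` directly, and clause (ii) is harmless elsewhere because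
`log x ≠ 0` for `x ≠ 1`.
-/

open Real Set

lemma exp_div_exp_add_one (a : ℝ) : exp a / (exp a + 1) = sigmoid a := by
  rw [sigmoid_def, exp_neg]
  field_simp

lemma sigmoid_log_div_one_sub {x : ℝ} (hx : x ∈ Ioo 0 1) : sigmoid (log (x / (1 - x))) = x := by
  have h1x : 0 < 1 - x := by linarith [hx.2]
  rw [← exp_div_exp_add_one, exp_log (div_pos hx.1 h1x)]
  field_simp
  ring

lemma eq_sigmoid_iff {x a : ℝ} (hx : x ∈ Ioo 0 1) : x = sigmoid a ↔ a = log (x / (1 - x)) := by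
  conv_lhs => rw [← sigmoid_log_div_one_sub hx]
  exact sigmoid_inj.trans eq_comm

lemma eq_tanh_iff {x b : ℝ} (hx : x ∈ Ioo (-1) 1) : x = tanh b ↔ b = artanh x := by
  constructor
  · rintro rfl
    exact (artanh_tanh b).symm
  · rintro rfl
    exact (tanh_artanh hx).symm

lemma log_div_one_sub_sub_two_mul_artanh {x : ℝ} (hx : x ∈ Ioo 0 1) :
    log (x / (1 - x)) - 2 * artanh x = log x - log (1 + x) := by
  obtain ⟨hx0, hx1⟩ := hx
  rw [artanh_eq_half_log ⟨by linarith, hx1.le⟩, log_div hx0.ne' (by linarith),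
    log_div (by linarith) (by linarith)]
  ring

lemma exists_sigmoid_tanh_iff {x y : ℝ} (hx : x ∈ Ioo 0 1) :
    (∃ a b : ℝ, x = exp a / (exp a + 1) ∧ x = tanh b ∧ y = a - 2 * b + log (x + 1)) ↔
      y = log x := by
  have hx' : x ∈ Ioo (-1) 1 := ⟨by linarith [hx.1], hx.2⟩
  simp only [exp_div_exp_add_one, eq_sigmoid_iff hx, eq_tanh_iff hx', exists_and_left,
    exists_eq_left]
  rw [log_div_one_sub_sub_two_mul_artanh hx, add_comm x, sub_add_cancel]

theorem psi_log_correct (x y : ℝ) :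
    ((1 < x → y = Real.log (max (x - 1) 0 + 1)) ∧
     (x = 1 ↔ y = 0) ∧
     (0 < x ∧ x < 1 → ∃ a b : ℝ, x = Real.exp a / (Real.exp a + 1) ∧ x = Real.tanh b ∧
        y = a - 2 * b + Real.log (max x 0 + 1)) ∧
     0 < x) ↔ (0 < x ∧ y = Real.log x) := by
  rcases le_or_gt x 0 with hx | hx
  · simp [hx.not_gt]
  rw [max_eq_left hx.le]
  rcases lt_trichotomy x 1 with hx1 | rfl | hx1
  · simp only [hx1.not_gt, hx1.ne, hx, hx1, exists_sigmoid_tanh_iff ⟨hx, hx1⟩, false_implies,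
      false_iff, true_and, true_implies, and_true, and_iff_right_iff_imp]
    rintro rfl
    exact (log_neg hx hx1).ne
  · simp
  · rw [max_eq_left (by linarith), sub_add_cancel]
    simp only [hx1, hx1.ne', hx1.not_gt, hx, false_implies, false_iff, true_and, true_implies,
      and_true, and_iff_left_iff_imp]
    rintro rfl
    exact (log_pos hx1).ne'
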